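/- Weak-majorization norm characterization with integral average: Let C, D_τ (τ ∈ Ω, a σ-compact metric space with probability measure ν) be symmetric T-product tensors in R^{m×m×p} with uniformly bounded norms and τ ↦ D_τ continuous. Then the eigenvalue vector λ⃗(C) is weakly majorized by ∫_Ω λ⃗(D_τ) dν(τ) (entrywise integral of ordered eigenvalue vectors) if and only if for every nondecreasing convex function f: R → [0,∞) and every unitarily invariant norm ‖·‖_ρ one has ‖f(C)‖_ρ ≤ ∫_Ω ‖f(D_τ)‖_ρ dν(τ). -/

import Mathlib

open scoped BigOperators
open MeasureTheory

/-- A symmetric gauge function on `ℝ^N` (corresponding via von Neumann's theorem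
to a unitarily invariant norm `‖H‖_ρ = ρ(λ⃗(|H|))`). -/
structure SymmGauge (N : ℕ) where
  toFun : (Fin N → ℝ) → ℝ
  nonneg : ∀ x, 0 ≤ toFun x
  triangle : ∀ x y, toFun (x + y) ≤ toFun x + toFun y
  homog : ∀ (c : ℝ) (x), toFun (c • x) = |c| * toFun x
  pos_of_ne_zero : ∀ x, x ≠ 0 → 0 < toFun x
  perm_invariant : ∀ (σ : Equiv.Perm (Fin N)) (x), toFun (x ∘ σ) = toFun x
  abs_invariant : ∀ x, toFun (fun i => |x i|) = toFun x

/-- Partial sum of the first `k` entries. -/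
def pSum {N : ℕ} (x : Fin N → ℝ) (k : ℕ) : ℝ :=
  ∑ i ∈ Finset.univ.filter (fun i : Fin N => (i : ℕ) < k), x i

/-! A monotone convex `f` preserves weak majorization `x ≺_w y` of an antitone `x`
(Hardy–Littlewood–Pólya): by the tangent-line inequality `f s ≥ f t + f'₊(t) (s - t)`, the
partial sums of `f ∘ x - f ∘ y` are bounded by Abel sums of the partial sums of `x - y`
against the antitone, nonnegative weights `f'₊(x i)`. Jensen's inequality moves `f` inside the
integrals coordinatewise, and Ky Fan dominance (a symmetric gauge is monotone for `≺_w` on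
nonnegative antitone vectors; test against a Hahn–Banach norming functional whose absolute
values are sorted decreasingly) gives `ρ(f ∘ a) ≤ ρ(∫ f ∘ b)`; Jensen for the convex function
`ρ` finishes. Conversely, `f t = max (t + c) 0` with `c` large shifts all entries by `c`, and
the Ky Fan `k`-norm of a nonnegative antitone vector is its `k`-th partial sum. -/

open Finset

section Majorization

variable {N : ℕ}

lemma pSum_add (x y : Fin N → ℝ) (k : ℕ) :
    pSum (fun i => x i + y i) k = pSum x k + pSum y k :=
  sum_add_distrib

lemma pSum_le_pSum {x y : Fin N → ℝ} (h : ∀ i, x i ≤ y i) (k : ℕ) : pSum x k ≤ pSum y k :=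
  sum_le_sum fun i _ => h i

lemma pSum_of_le {k : ℕ} (hk : N ≤ k) (x : Fin N → ℝ) : pSum x k = ∑ i, x i := by
  unfold pSum
  rw [filter_true_of_mem fun i _ => i.isLt.trans_le hk]

lemma pSum_eq_sum_ite (x : Fin N → ℝ) (k : ℕ) :
    pSum x k = ∑ i : Fin N, if (i : ℕ) < k then x i else 0 :=
  sum_filter _ _

def zeroExtend (x : Fin N → ℝ) (n : ℕ) : ℝ := if h : n < N then x ⟨n, h⟩ else 0

lemma pSum_eq_sum_range (x : Fin N → ℝ) (k : ℕ) :
    pSum x k = ∑ n ∈ range k, zeroExtend x n := by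
  calc pSum x k = ∑ n ∈ range N, if n < k then zeroExtend x n else 0 := by
        rw [pSum_eq_sum_ite, ← Fin.sum_univ_eq_sum_range]
        simp [zeroExtend]
    _ = ∑ n ∈ range k, if n < N then zeroExtend x n else 0 := by
        rw [← sum_filter, ← sum_filter]
        congr 1
        ext n
        simp only [mem_filter, mem_range]
        omega
    _ = ∑ n ∈ range k, zeroExtend x n := sum_congr rfl fun n _ => by
        unfold zeroExtend
        split_ifs <;> rfl

lemma sum_range_mul_nonpos {t d : ℕ → ℝ} (ht : Antitone t) (ht0 : 0 ≤ t)
    (hd : ∀ n, ∑ i ∈ range n, d i ≤ 0) (n : ℕ) : ∑ i ∈ range n, t i * d i ≤ 0 := by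
  simp_rw [← smul_eq_mul]
  rw [sum_range_by_parts]
  have hlast : t (n - 1) • ∑ i ∈ range n, d i ≤ 0 := mul_nonpos_of_nonneg_of_nonpos (ht0 _) (hd n)
  have hsteps : 0 ≤ ∑ i ∈ range (n - 1), (t (i + 1) - t i) • ∑ j ∈ range (i + 1), d j :=
    sum_nonneg fun i _ => mul_nonneg_of_nonpos_of_nonpos (sub_nonpos.2 (ht i.le_succ)) (hd _)
  linarith

lemma pSum_mul_le_pSum_mul {w x y : Fin N → ℝ} (hw : Antitone w) (hw0 : 0 ≤ w)
    (h : ∀ k, pSum x k ≤ pSum y k) (k : ℕ) : pSum (w * x) k ≤ pSum (w * y) k := by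
  have hW : Antitone (zeroExtend w) := by
    intro m n hmn
    unfold zeroExtend
    split_ifs
    · exact hw (Fin.mk_le_mk.2 hmn)
    · omega
    · exact hw0 _
    · rfl
  have hW0 : 0 ≤ zeroExtend w := fun n => by
    unfold zeroExtend; split_ifs
    exacts [hw0 _, le_rfl]
  have hd : ∀ n, ∑ i ∈ range n, (zeroExtend x i - zeroExtend y i) ≤ 0 := fun n => by
    rw [sum_sub_distrib, ← pSum_eq_sum_range, ← pSum_eq_sum_range]
    linarith [h n]
  have := sum_range_mul_nonpos hW hW0 hd k
  rw [← sub_nonpos, pSum_eq_sum_range, pSum_eq_sum_range, ← sum_sub_distrib]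
  convert this using 2 with n
  unfold zeroExtend
  split_ifs <;> simp [mul_sub]

lemma ConvexOn.rightDeriv_mul_sub_le {f : ℝ → ℝ} (hf : ConvexOn ℝ Set.univ f) (x y : ℝ) :
    derivWithin f (Set.Ioi x) x * (y - x) ≤ f y - f x := by
  have hx : x ∈ interior Set.univ := by simp
  rcases lt_trichotomy x y with hxy | rfl | hxy
  · have := hf.rightDeriv_le_slope_of_mem_interior hx (Set.mem_univ y) hxy
    rwa [slope_def_field, le_div_iff₀ (sub_pos.2 hxy)] at this
  · simp
  · have := (hf.slope_le_leftDeriv_of_mem_interior (Set.mem_univ y) hx hxy).trans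
      (hf.leftDeriv_le_rightDeriv_of_mem_interior hx)
    rw [slope_def_field, div_le_iff₀ (sub_pos.2 hxy)] at this
    linarith

theorem pSum_comp_le_pSum_comp {f : ℝ → ℝ} (hf : ConvexOn ℝ Set.univ f) (hm : Monotone f)
    {x y : Fin N → ℝ} (hx : Antitone x) (h : ∀ k, pSum x k ≤ pSum y k) (k : ℕ) :
    pSum (fun i => f (x i)) k ≤ pSum (fun i => f (y i)) k := by
  set s : Fin N → ℝ := fun i => derivWithin f (Set.Ioi (x i)) (x i)
  have hs : Antitone s := fun i j hij => hf.monotoneOn_rightDeriv (by simp) (by simp) (hx hij)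
  have hs0 : 0 ≤ s := fun i => (hm.monotoneOn _).derivWithin_nonneg
  have htangent : ∀ i, f (x i) ≤ f (y i) + (s i * x i - s i * y i) := fun i => by
    linarith [hf.rightDeriv_mul_sub_le (x i) (y i)]
  calc pSum (fun i => f (x i)) k
      ≤ pSum (fun i => f (y i)) k + (pSum (s * x) k - pSum (s * y) k) := by
        unfold pSum
        rw [← sum_sub_distrib, ← sum_add_distrib]
        exact sum_le_sum fun i _ => htangent i
    _ ≤ pSum (fun i => f (y i)) k := by linarith [pSum_mul_le_pSum_mul hs hs0 h k]

end Majorization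

namespace SymmGauge

variable {N : ℕ} (ρ : SymmGauge N)

lemma map_zero : ρ.toFun 0 = 0 := by
  simpa using ρ.homog 0 0

lemma convexOn : ConvexOn ℝ Set.univ ρ.toFun :=
  ⟨convex_univ, fun u _ v _ s t hs ht _ => by
    simpa [ρ.homog, abs_of_nonneg hs, abs_of_nonneg ht] using ρ.triangle (s • u) (t • v)⟩

protected lemma continuous : Continuous ρ.toFun :=
  ρ.convexOn.locallyLipschitz.continuous

lemma apply_mul_comp_perm {s : Fin N → ℝ} (hs : ∀ i, |s i| = 1) (σ : Equiv.Perm (Fin N))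
    (v : Fin N → ℝ) : ρ.toFun (fun i => s i * v (σ i)) = ρ.toFun v := by
  rw [← ρ.abs_invariant, ← ρ.abs_invariant v]
  simp only [abs_mul, hs, one_mul]
  exact ρ.perm_invariant σ fun i => |v i|

lemma exists_dual (x : Fin N → ℝ) :
    ∃ z : Fin N → ℝ, (∀ v, ∑ i, z i * v i ≤ ρ.toFun v) ∧ ∑ i, z i * x i = ρ.toFun x := by
  by_cases hx : x = 0
  · exact ⟨0, fun v => by simpa using ρ.nonneg v, by simp [hx, ρ.map_zero]⟩
  obtain ⟨g, hgx, hg⟩ := exists_extension_of_le_sublinear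
    (LinearPMap.mkSpanSingleton (K := ℝ) x (ρ.toFun x) hx) ρ.toFun
    (fun c hc v => by rw [ρ.homog, abs_of_pos hc]) ρ.triangle (by
      rintro ⟨_, hv⟩
      obtain ⟨t, rfl⟩ := Submodule.mem_span_singleton.1 hv
      rw [LinearPMap.mkSpanSingleton'_apply, smul_eq_mul]
      rcases le_or_gt 0 t with ht | ht
      · rw [ρ.homog, abs_of_nonneg ht, RingHom.id_apply]
      · exact (mul_nonpos_of_nonpos_of_nonneg ht.le (ρ.nonneg x)).trans (ρ.nonneg _))
  have hg_apply : ∀ v, g v = ∑ i, (g fun j => if i = j then 1 else 0) * v i := fun v => by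
    simp only [LinearMap.pi_apply_eq_sum_univ g v, smul_eq_mul, mul_comm]
  refine ⟨fun i => g fun j => if i = j then 1 else 0, fun v => ?_, ?_⟩
  · rw [← hg_apply]
    exact hg v
  · rw [← hg_apply, hgx ⟨x, Submodule.mem_span_singleton_self x⟩,
      LinearPMap.mkSpanSingleton_apply]

lemma dual_abs_comp_perm {z : Fin N → ℝ} (hz : ∀ v, ∑ i, z i * v i ≤ ρ.toFun v)
    (σ : Equiv.Perm (Fin N)) (v : Fin N → ℝ) : ∑ i, |z (σ i)| * v i ≤ ρ.toFun v := by
  set s : Fin N → ℝ := fun j => if 0 ≤ z j then 1 else -1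
  have hs : ∀ j, |s j| = 1 := fun j => by simp only [s]; split_ifs <;> simp
  have hzs : ∀ j, z j * s j = |z j| := fun j => by
    simp only [s]
    split_ifs with h
    · rw [abs_of_nonneg h, mul_one]
    · rw [abs_of_neg (not_le.1 h), mul_neg_one]
  calc ∑ i, |z (σ i)| * v i = ∑ j, z j * (s j * v (σ.symm j)) := by
        rw [← Equiv.sum_comp σ fun j => z j * (s j * v (σ.symm j))]
        simp only [Equiv.symm_apply_apply, ← mul_assoc, hzs]
    _ ≤ ρ.toFun fun j => s j * v (σ.symm j) := hz _
    _ = ρ.toFun v := ρ.apply_mul_comp_perm hs σ.symm v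

lemma exists_antitone_dual {x : Fin N → ℝ} (hx : Antitone x) (hx0 : 0 ≤ x) :
    ∃ w : Fin N → ℝ, Antitone w ∧ 0 ≤ w ∧ (∀ v, ∑ i, w i * v i ≤ ρ.toFun v) ∧
      ρ.toFun x ≤ ∑ i, w i * x i := by
  obtain ⟨z, hz, hzx⟩ := ρ.exists_dual x
  set σ := Tuple.sort fun i => -|z i|
  have hw : Antitone fun i => |z (σ i)| := fun i j hij =>
    neg_le_neg_iff.1 (Tuple.monotone_sort (fun i => -|z i|) hij)
  refine ⟨fun i => |z (σ i)|, hw, fun i => abs_nonneg _, ρ.dual_abs_comp_perm hz σ, ?_⟩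
  calc ρ.toFun x = ∑ i, z i * x i := hzx.symm
    _ ≤ ∑ i, |z i| * x i :=
        sum_le_sum fun i _ => mul_le_mul_of_nonneg_right (le_abs_self _) (hx0 i)
    _ = ∑ i, |z (σ i)| * x (σ i) := (Equiv.sum_comp σ fun i => |z i| * x i).symm
    _ ≤ ∑ i, |z (σ i)| * x i := (hw.monovary hx).sum_mul_comp_perm_le_sum_mul

theorem le_of_pSum_le {x y : Fin N → ℝ} (hx : Antitone x) (hx0 : 0 ≤ x)
    (h : ∀ k, pSum x k ≤ pSum y k) : ρ.toFun x ≤ ρ.toFun y := by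
  obtain ⟨w, hw, hw0, hdual, hwx⟩ := ρ.exists_antitone_dual hx hx0
  calc ρ.toFun x ≤ ∑ i, w i * x i := hwx
    _ ≤ ∑ i, w i * y i := by simpa [pSum_of_le le_rfl] using pSum_mul_le_pSum_mul hw hw0 h N
    _ ≤ ρ.toFun y := hdual y

end SymmGauge

section KyFan

variable {N : ℕ}

/-- The Ky Fan `k`-norm: the sum of the `k` largest entries of `|x|`. -/
noncomputable def kyFanNorm (k : ℕ) (x : Fin N → ℝ) : ℝ :=
  (univ : Finset (Equiv.Perm (Fin N))).sup' univ_nonempty fun σ => pSum (fun i => |x (σ i)|) k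

lemma pSum_abs_comp_le_kyFanNorm (k : ℕ) (x : Fin N → ℝ) (σ : Equiv.Perm (Fin N)) :
    pSum (fun i => |x (σ i)|) k ≤ kyFanNorm k x :=
  le_sup' (fun σ : Equiv.Perm (Fin N) => pSum (fun i => |x (σ i)|) k) (mem_univ σ)

lemma kyFanNorm_le {k : ℕ} {x : Fin N → ℝ} {r : ℝ}
    (h : ∀ σ : Equiv.Perm (Fin N), pSum (fun i => |x (σ i)|) k ≤ r) : kyFanNorm k x ≤ r :=
  sup'_le _ _ fun σ _ => h σ

lemma kyFanNorm_comp_perm_le (k : ℕ) (x : Fin N → ℝ) (τ : Equiv.Perm (Fin N)) :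
    kyFanNorm k (x ∘ τ) ≤ kyFanNorm k x :=
  kyFanNorm_le fun σ => pSum_abs_comp_le_kyFanNorm k x (τ * σ)

noncomputable def kyFan (k : ℕ) (hk : 1 ≤ k) : SymmGauge N where
  toFun := kyFanNorm k
  nonneg x := (sum_nonneg fun i _ => abs_nonneg _).trans (pSum_abs_comp_le_kyFanNorm k x 1)
  triangle x y := kyFanNorm_le fun σ => by
    calc pSum (fun i => |(x + y) (σ i)|) k
        ≤ pSum (fun i => |x (σ i)|) k + pSum (fun i => |y (σ i)|) k := by
          rw [← pSum_add]
          exact pSum_le_pSum (fun i => abs_add_le _ _) k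
      _ ≤ kyFanNorm k x + kyFanNorm k y :=
          add_le_add (pSum_abs_comp_le_kyFanNorm k x σ) (pSum_abs_comp_le_kyFanNorm k y σ)
  homog c x := by
    simp only [kyFanNorm, pSum, Pi.smul_apply, smul_eq_mul, abs_mul, ← mul_sum]
    exact (mul₀_sup' (abs_nonneg c) _ _ _).symm
  pos_of_ne_zero x hx := by
    obtain ⟨i, hi⟩ := Function.ne_iff.1 hx
    set o : Fin N := ⟨0, i.pos⟩
    calc 0 < |x i| := abs_pos.2 hi
      _ = |x (Equiv.swap o i o)| := by rw [Equiv.swap_apply_left]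
      _ ≤ pSum (fun j => |x (Equiv.swap o i j)|) k :=
          single_le_sum (f := fun j => |x (Equiv.swap o i j)|) (fun j _ => abs_nonneg _)
            (by simp [o]; omega)
      _ ≤ kyFanNorm k x := pSum_abs_comp_le_kyFanNorm k x _
  perm_invariant τ x := le_antisymm (kyFanNorm_comp_perm_le k x τ) (by
    simpa [Function.comp_assoc] using kyFanNorm_comp_perm_le k (x ∘ τ) τ⁻¹)
  abs_invariant x := by simp only [kyFanNorm, abs_abs]

lemma kyFan_apply_of_antitone {k : ℕ} (hk : 1 ≤ k) {v : Fin N → ℝ} (hv : Antitone v)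
    (hv0 : 0 ≤ v) : (kyFan k hk).toFun v = pSum v k := by
  have hind : Antitone fun i : Fin N => if (i : ℕ) < k then (1 : ℝ) else 0 := fun i j hij => by
    have hij' : (i : ℕ) ≤ j := hij
    dsimp only
    split_ifs <;> first | omega | norm_num
  refine le_antisymm (kyFanNorm_le fun σ => ?_) ?_
  · calc pSum (fun i => |v (σ i)|) k
        = ∑ i : Fin N, (if (i : ℕ) < k then (1 : ℝ) else 0) * v (σ i) := by
          simp [pSum_eq_sum_ite, abs_of_nonneg (hv0 _)]
      _ ≤ ∑ i : Fin N, (if (i : ℕ) < k then (1 : ℝ) else 0) * v i :=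
          (hind.monovary hv).sum_mul_comp_perm_le_sum_mul
      _ = pSum v k := by simp [pSum_eq_sum_ite]
  · calc pSum v k = pSum (fun i => |v ((1 : Equiv.Perm (Fin N)) i)|) k := by
          simp [abs_of_nonneg (hv0 _)]
      _ ≤ kyFanNorm k v := pSum_abs_comp_le_kyFanNorm k v 1

end KyFan

section Integral

variable {N : ℕ} {Ω : Type*} [MeasurableSpace Ω] {ν : Measure Ω}

lemma integrable_comp_of_isBounded_range [TopologicalSpace Ω] [OpensMeasurableSpace Ω]
    [IsFiniteMeasure ν] {E F : Type*} [PseudoMetricSpace E] [ProperSpace E]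
    [NormedAddCommGroup F] [SecondCountableTopology F] {b : Ω → E} (hb : Continuous b)
    (hbd : Bornology.IsBounded (Set.range b)) {g : E → F} (hg : Continuous g) :
    Integrable (fun τ => g (b τ)) ν := by
  obtain ⟨C, hC⟩ := (hbd.isCompact_closure.image hg).isBounded.exists_norm_le
  exact Integrable.of_bound (hg.comp hb).aestronglyMeasurable C
    (ae_of_all _ fun τ => hC _ ⟨b τ, subset_closure ⟨τ, rfl⟩, rfl⟩)

theorem SymmGauge.apply_comp_le_integral [TopologicalSpace Ω] [OpensMeasurableSpace Ω]
    [IsProbabilityMeasure ν] (ρ : SymmGauge N) {f : ℝ → ℝ} (hfm : Monotone f)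
    (hfc : ConvexOn ℝ Set.univ f) (hf0 : ∀ t, 0 ≤ f t) {a : Fin N → ℝ} (ha : Antitone a)
    {b : Ω → Fin N → ℝ} (hbc : Continuous b) (hbd : Bornology.IsBounded (Set.range b))
    (h : ∀ k, pSum a k ≤ pSum (fun i => ∫ τ, b τ i ∂ν) k) :
    ρ.toFun (fun i => f (a i)) ≤ ∫ τ, ρ.toFun (fun i => f (b τ i)) ∂ν := by
  have hf : Continuous f := hfc.locallyLipschitz.continuous
  have hF : Continuous fun (v : Fin N → ℝ) i => f (v i) := by fun_prop
  have hFb : Integrable (fun τ i => f (b τ i)) ν := integrable_comp_of_isBounded_range hbc hbd hF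
  have hjensen : ∀ i, f (∫ τ, b τ i ∂ν) ≤ ∫ τ, f (b τ i) ∂ν := fun i =>
    hfc.map_integral_le hf.continuousOn isClosed_univ (ae_of_all _ fun _ => Set.mem_univ _)
      (integrable_comp_of_isBounded_range hbc hbd (continuous_apply i)) (hFb.eval i)
  calc ρ.toFun (fun i => f (a i)) ≤ ρ.toFun (fun i => ∫ τ, f (b τ i) ∂ν) :=
        ρ.le_of_pSum_le (hfm.comp_antitone ha) (fun i => hf0 _) fun k =>
          (pSum_comp_le_pSum_comp hfc hfm ha h k).trans (pSum_le_pSum hjensen k)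
    _ = ρ.toFun (∫ τ, fun i => f (b τ i) ∂ν) := by
        congr 1
        funext i
        exact (eval_integral (fun i => hFb.eval i) i).symm
    _ ≤ ∫ τ, ρ.toFun (fun i => f (b τ i)) ∂ν :=
        ρ.convexOn.map_integral_le ρ.continuous.continuousOn isClosed_univ
          (ae_of_all _ fun _ => Set.mem_univ _) hFb
          (integrable_comp_of_isBounded_range hbc hbd (ρ.continuous.comp hF))

theorem pSum_le_pSum_integral_of_kyFan [IsProbabilityMeasure ν] {a : Fin N → ℝ}
    (ha : Antitone a) {b : Ω → Fin N → ℝ} (hb : ∀ τ, Antitone (b τ))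
    (hbi : ∀ i, Integrable (fun τ => b τ i) ν) {c : ℝ} (hac : ∀ i, 0 ≤ a i + c)
    (hbc : ∀ τ i, 0 ≤ b τ i + c) {k : ℕ} (hk : 1 ≤ k)
    (h : (kyFan k hk).toFun (fun i => a i + c) ≤
      ∫ τ, (kyFan k hk).toFun (fun i => b τ i + c) ∂ν) :
    pSum a k ≤ pSum (fun i => ∫ τ, b τ i ∂ν) k := by
  have hshift : ∀ v : Fin N → ℝ, Antitone v → (∀ i, 0 ≤ v i + c) →
      (kyFan k hk).toFun (fun i => v i + c) = pSum v k + pSum (fun _ => c) k := fun v hv hvc => by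
    rw [kyFan_apply_of_antitone hk (hv.add_const c) hvc, pSum_add]
  have hint : Integrable (fun τ => pSum (b τ) k) ν := integrable_finsetSum _ fun i _ => hbi i
  simp only [hshift a ha hac, hshift _ (hb _) (hbc _)] at h
  rw [integral_add hint (integrable_const _), integral_const] at h
  rw [show pSum (fun i => ∫ τ, b τ i ∂ν) k = ∫ τ, pSum (b τ) k ∂ν from
    (integral_finsetSum _ fun i _ => hbi i).symm]
  simpa using h

end Integral

theorem weak_majorization_integral_average_iff_general {N : ℕ} {Ω : Type*}
    [MetricSpace Ω] [MeasurableSpace Ω] [BorelSpace Ω]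
    (ν : Measure Ω) [IsProbabilityMeasure ν]
    (a : Fin N → ℝ) (ha : Antitone a)
    (b : Ω → Fin N → ℝ) (hb : ∀ τ, Antitone (b τ))
    (hbc : Continuous b) (hbd : ∃ M, ∀ τ i, |b τ i| ≤ M) :
    ((∀ k, pSum a k ≤ pSum (fun i => ∫ τ, b τ i ∂ν) k) ↔
      (∀ f : ℝ → ℝ, Monotone f → ConvexOn ℝ Set.univ f → (∀ t, 0 ≤ f t) →
        ∀ ρ : SymmGauge N,
          ρ.toFun (fun i => f (a i)) ≤ ∫ τ, ρ.toFun (fun i => f (b τ i)) ∂ν)) := by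
  obtain ⟨M, hM⟩ := hbd
  have hbB : Bornology.IsBounded (Set.range b) :=
    isBounded_iff_forall_norm_le.2 ⟨max M 0, Set.forall_mem_range.2 fun τ =>
      (pi_norm_le_iff_of_nonneg (le_max_right _ _)).2 fun i => (hM τ i).trans (le_max_left _ _)⟩
  refine ⟨fun h f hfm hfc hf0 ρ => ρ.apply_comp_le_integral hfm hfc hf0 ha hbc hbB h, fun h k => ?_⟩
  rcases Nat.eq_zero_or_pos k with rfl | hk
  · simp [pSum]
  set c := max M ‖a‖
  have hac : ∀ i, 0 ≤ a i + c := fun i => by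
    linarith [neg_abs_le (a i), norm_le_pi_norm a i, Real.norm_eq_abs (a i), le_max_right M ‖a‖]
  have hbc' : ∀ τ i, 0 ≤ b τ i + c := fun τ i => by
    linarith [neg_abs_le (b τ i), hM τ i, le_max_left M ‖a‖]
  have hmax := h (fun t => max (t + c) 0) ((monotone_id.add_const c).max monotone_const)
    (((convexOn_id convex_univ).add (convexOn_const c convex_univ)).sup
      (convexOn_const 0 convex_univ)) (fun _ => le_max_right _ _) (kyFan k hk)
  simp only [max_eq_left, hac, hbc'] at hmax
  exact pSum_le_pSum_integral_of_kyFan ha hb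
    (fun i => integrable_comp_of_isBounded_range hbc hbB (continuous_apply i)) hac hbc' hk hmax

/-- weak-majorization norm characterization with integral average.
Here `N = m·p`, `a = λ⃗(C)` is the nonincreasing T-eigenvalue vector of the
symmetric T-product tensor `C`, and `b τ = λ⃗(D_τ)` that of `D_τ`; for a
nondecreasing convex `f ≥ 0`, `‖f(C)‖_ρ = ρ(f ∘ λ⃗(C))` for every unitarily
invariant norm given by a symmetric gauge function `ρ`.  The statement:
`λ⃗(C) ≺_w ∫ λ⃗(D_τ) dν(τ)` iff for every such `f` and every `ρ`,
`‖f(C)‖_ρ ≤ ∫ ‖f(D_τ)‖_ρ dν(τ)`. -/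
theorem weak_majorization_integral_average_iff {N : ℕ} {Ω : Type*}
    [MetricSpace Ω] [SigmaCompactSpace Ω] [MeasurableSpace Ω] [BorelSpace Ω]
    (ν : Measure Ω) [IsProbabilityMeasure ν]
    (a : Fin N → ℝ) (ha : Antitone a)
    (b : Ω → Fin N → ℝ) (hb : ∀ τ, Antitone (b τ))
    (hbc : Continuous b) (hbd : ∃ M, ∀ τ i, |b τ i| ≤ M) :
    ((∀ k, pSum a k ≤ pSum (fun i => ∫ τ, b τ i ∂ν) k) ↔
      (∀ f : ℝ → ℝ, Monotone f → ConvexOn ℝ Set.univ f → (∀ t, 0 ≤ f t) →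
        ∀ ρ : SymmGauge N,
          ρ.toFun (fun i => f (a i)) ≤ ∫ τ, ρ.toFun (fun i => f (b τ i)) ∂ν)) :=
  weak_majorization_integral_average_iff_general ν a ha b hb hbc hbd
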